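/- The bottom-up table-filling recurrence for ⟨B⟩ is correct: for a track ρ̃ of length m and formula ⟨B⟩φ1, defining T[⟨B⟩φ1, 1] = ⊥ and T[⟨B⟩φ1, i] = T[⟨B⟩φ1, i−1] ∨ T[φ1, i−1] for 2 ≤ i ≤ m, if T[φ1, j] = ⊤ iff K, ρ̃(1,j) ⊨ φ1 for all j, then T[⟨B⟩φ1, i] = ⊤ iff K, ρ̃(1,i) ⊨ ⟨B⟩φ1 for all 1 ≤ i ≤ m. -/

import Mathlib

structure Kripke (AP W : Type) where
  delta : W → W → Prop
  leftTotal : ∀ w, ∃ w', delta w w'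
  mu : W → Set AP
  w0 : W

def IsTrack {AP W : Type} (K : Kripke AP W) (l : List W) : Prop :=
  l ≠ [] ∧ l.Chain' K.delta

inductive HS (AP : Type) where
  | prop : AP → HS AP
  | fls : HS AP
  | neg : HS AP → HS AP
  | and : HS AP → HS AP → HS AP
  | diaA : HS AP → HS AP
  | diaAbar : HS AP → HS AP
  | diaB : HS AP → HS AP
  | diaE : HS AP → HS AP

def sat {AP W : Type} (K : Kripke AP W) : HS AP → List W → Prop
  | .prop p, l => ∀ w ∈ l, p ∈ K.mu w
  | .fls, _ => False
  | .neg φ, l => ¬ sat K φ l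
  | .and φ ψ, l => sat K φ l ∧ sat K ψ l
  | .diaA φ, l => ∃ η, IsTrack K η ∧ η.head? = l.getLast? ∧ sat K φ η
  | .diaAbar φ, l => ∃ η, IsTrack K η ∧ η.getLast? = l.head? ∧ sat K φ η
  | .diaB φ, l => ∃ η, η ≠ [] ∧ η ≠ l ∧ η <+: l ∧ sat K φ η
  | .diaE φ, l => ∃ η, η ≠ [] ∧ η ≠ l ∧ η <:+ l ∧ sat K φ η

def boxB {AP : Type} (φ : HS AP) : HS AP := .neg (.diaB (.neg φ))
def top' {AP : Type} : HS AP := .neg .fls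

/-! The proper prefixes of `ρ.take (i + 1)` are those of `ρ.take i` together with `ρ.take i`
itself, so `⟨B⟩φ` holds on `ρ.take (i + 1)` iff it holds on `ρ.take i` or `φ` does; this is
the recurrence, and a prefix of length one has no proper prefix at all. -/

section diaB

variable {AP W : Type} (K : Kripke AP W) (φ : HS AP)

theorem sat_diaB_iff_exists_take (l : List W) :
    sat K (.diaB φ) l ↔ ∃ j, 0 < j ∧ j < l.length ∧ sat K φ (l.take j) := by
  simp only [sat]
  constructor
  · rintro ⟨η, hne, hneq, hpre, hsat⟩
    have hlt : η.length < l.length :=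
      hpre.length_le.lt_of_ne fun h => hneq (hpre.eq_of_length h)
    exact ⟨η.length, List.length_pos_iff.mpr hne, hlt, List.prefix_iff_eq_take.mp hpre ▸ hsat⟩
  · rintro ⟨j, hj, hjl, hsat⟩
    have hlen : (l.take j).length = j := List.length_take_of_le hjl.le
    refine ⟨l.take j, ?_, ?_, List.take_prefix j l, hsat⟩
    · rintro h; rw [h, List.length_nil] at hlen; omega
    · rintro h; rw [h] at hlen; omega

theorem not_sat_diaB_of_length_le_one {l : List W} (hl : l.length ≤ 1) :
    ¬ sat K (.diaB φ) l := by
  rw [sat_diaB_iff_exists_take]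
  omega

theorem sat_diaB_take_iff {l : List W} {i : ℕ} (hi : i ≤ l.length) :
    sat K (.diaB φ) (l.take i) ↔ ∃ j, 0 < j ∧ j < i ∧ sat K φ (l.take j) := by
  rw [sat_diaB_iff_exists_take, List.length_take_of_le hi]
  refine exists_congr fun j => and_congr_right fun _ => and_congr_right fun hj => ?_
  rw [List.take_take, min_eq_left hj.le]

theorem sat_diaB_take_succ {l : List W} {n : ℕ} (hn : 0 < n) (hnl : n + 1 ≤ l.length) :
    sat K (.diaB φ) (l.take (n + 1)) ↔ sat K (.diaB φ) (l.take n) ∨ sat K φ (l.take n) := by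
  rw [sat_diaB_take_iff K φ hnl, sat_diaB_take_iff K φ (by omega)]
  constructor
  · rintro ⟨j, hj, hjn, hsat⟩
    rcases (Nat.lt_succ_iff.mp hjn).lt_or_eq with hjn | rfl
    · exact Or.inl ⟨j, hj, hjn, hsat⟩
    · exact Or.inr hsat
  · rintro (⟨j, hj, hjn, hsat⟩ | hsat)
    · exact ⟨j, hj, hjn.trans n.lt_succ_self, hsat⟩
    · exact ⟨n, hn, n.lt_succ_self, hsat⟩

end diaB

theorem table_diaB_correct_general {AP W : Type} (K : Kripke AP W) (ρ : List W)
    (φ₁ : HS AP) (T Tφ : ℕ → Prop)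
    (hT1 : ¬ T 1)
    (hrec : ∀ i : ℕ, 2 ≤ i → i ≤ ρ.length → (T i ↔ T (i-1) ∨ Tφ (i-1)))
    (hTφ : ∀ j : ℕ, 1 ≤ j → j ≤ ρ.length → (Tφ j ↔ sat K φ₁ (ρ.take j))) :
    ∀ i : ℕ, 1 ≤ i → i ≤ ρ.length →
      (T i ↔ sat K (.diaB φ₁) (ρ.take i)) := by
  intro i hi
  induction i, hi using Nat.le_induction with
  | base =>
    intro _
    exact iff_of_false hT1 (not_sat_diaB_of_length_le_one K φ₁ (by simp))
  | succ n hn ih =>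
    intro hnρ
    rw [hrec (n + 1) (by omega) hnρ, Nat.add_sub_cancel, ih (by omega), hTφ n hn (by omega),
      sat_diaB_take_succ K φ₁ hn hnρ]

/-- Correctness of the bottom-up table-filling recurrence for ⟨B⟩. -/
theorem table_diaB_correct {AP W : Type} (K : Kripke AP W) (ρ : List W)
    (hρ : IsTrack K ρ) (φ₁ : HS AP) (T Tφ : ℕ → Prop)
    (hT1 : ¬ T 1)
    (hrec : ∀ i : ℕ, 2 ≤ i → i ≤ ρ.length → (T i ↔ T (i-1) ∨ Tφ (i-1)))
    (hTφ : ∀ j : ℕ, 1 ≤ j → j ≤ ρ.length → (Tφ j ↔ sat K φ₁ (ρ.take j))) :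
    ∀ i : ℕ, 1 ≤ i → i ≤ ρ.length →
      (T i ↔ sat K (.diaB φ₁) (ρ.take i)) :=
  table_diaB_correct_general K ρ φ₁ T Tφ hT1 hrec hTφ
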